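/- The icosahedron graph is C_4-induced-saturated: it contains no induced 4-cycle, but deleting any edge or adding any non-edge creates an induced 4-cycle. -/

import Mathlib

open SimpleGraph

/-- `G` contains an induced copy of `H`. -/
def HasInducedCopy {W V : Type*} (H : SimpleGraph W) (G : SimpleGraph V) : Prop :=
  Nonempty (H ↪g G)

/-- `G` is `H`-induced-saturated: `G` has no induced copy of `H`, but deleting any edge
or adding any non-edge creates an induced copy of `H`. -/
def IsIndSat {V W : Type*} (G : SimpleGraph V) (H : SimpleGraph W) : Prop :=
  ¬ HasInducedCopy H G ∧
  (∀ u v : V, G.Adj u v → HasInducedCopy H (G.deleteEdges {s(u, v)})) ∧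
  (∀ u v : V, u ≠ v → ¬ G.Adj u v →
    HasInducedCopy H (G ⊔ SimpleGraph.fromEdgeSet {s(u, v)}))

/-- The icosahedron: two wheels with 5 spokes (wheel `i` has center `(i, none)` and outer
cycle `(i, some ℓ)` for `ℓ : ZMod 5`), with outer cycles joined by the zig-zag edges
`(0, some ℓ) ~ (1, some ℓ)` and `(0, some ℓ) ~ (1, some (ℓ+1))`. -/
def icosahedron : SimpleGraph (Fin 2 × Option (ZMod 5)) :=
  SimpleGraph.fromRel (fun x y =>
    (x.1 = y.1 ∧ x.2 = none) ∨
    (x.1 = y.1 ∧ ∃ ℓ : ZMod 5, x.2 = some ℓ ∧ y.2 = some (ℓ + 1)) ∨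
    (x.1 = 0 ∧ y.1 = 1 ∧ ∃ ℓ : ZMod 5, x.2 = some ℓ ∧ (y.2 = some ℓ ∨ y.2 = some (ℓ + 1))))

/-- The cycle `C₄` on four vertices. -/
def cycle4 : SimpleGraph (ZMod 4) :=
  SimpleGraph.fromRel (fun i j => j = i + 1)


/-!
Every vertex link of the icosahedron is a 5-cycle, from which one reads off three local facts.
The two common neighbours of adjacent vertices are non-adjacent, so deleting an edge `uv` leaves
the induced 4-cycle `u x v y`. Two vertices at distance two have two adjacent common neighbours
and antipodal vertices have none, so there is no induced 4-cycle. Any two non-adjacent vertices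
are the ends of an induced path of length three, which an added edge closes into an induced
4-cycle. The local facts are checked by exhaustive computation on the twelve vertices.
-/

instance : DecidableRel cycle4.Adj := fun i j => decidable_of_iff' _ (fromRel_adj _ i j)

instance : DecidableRel icosahedron.Adj := fun x y => decidable_of_iff' _ (fromRel_adj _ x y)

theorem ZMod.forall_four {P : ZMod 4 → Prop} : (∀ i, P i) ↔ P 0 ∧ P 1 ∧ P 2 ∧ P 3 :=
  ⟨fun h => ⟨h 0, h 1, h 2, h 3⟩, fun ⟨h0, h1, h2, h3⟩ i => by fin_cases i <;> assumption⟩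

theorem cycle4_adj_iff {i j : ZMod 4} : cycle4.Adj i j ↔ j = i + 1 ∨ i = j + 1 := by
  rw [cycle4, fromRel_adj, and_iff_right_iff_imp]
  revert i j
  decide

section InducedFourCycle

variable {V : Type*} {G : SimpleGraph V}

theorem hasInducedCopy_cycle4_iff : HasInducedCopy cycle4 G ↔ ∃ a b c d, a ≠ c ∧ b ≠ d ∧
    G.Adj a b ∧ G.Adj b c ∧ G.Adj c d ∧ G.Adj d a ∧ ¬G.Adj a c ∧ ¬G.Adj b d := by
  constructor
  · rintro ⟨e⟩
    refine ⟨e 0, e 1, e 2, e 3, ?_, ?_, ?_, ?_, ?_, ?_, ?_, ?_⟩ <;>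
      simp only [ne_eq, e.map_rel_iff, e.injective.eq_iff] <;> decide
  · rintro ⟨a, b, c, d, hac, hbd, hab, hbc, hcd, hda, nac, nbd⟩
    let f : ZMod 4 → V := ![a, b, c, d]
    have hf : f 0 = a ∧ f 1 = b ∧ f 2 = c ∧ f 3 = d := ⟨rfl, rfl, rfl, rfl⟩
    have hinj : Function.Injective f := by
      simp only [Function.Injective, ZMod.forall_four, hf]
      simp +decide [hab.ne, hbc.ne, hcd.ne, hda.ne', hac, hbd, eq_comm]
    have hadj : ∀ i j, G.Adj (f i) (f j) ↔ cycle4.Adj i j := by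
      simp only [ZMod.forall_four, cycle4_adj_iff, hf]
      simp +decide [*, hda.symm, adj_comm]
    exact ⟨⟨⟨f, hinj⟩, hadj _ _⟩⟩

theorem not_hasInducedCopy_cycle4
    (h : ∀ a c, a ≠ c → ¬G.Adj a c → G.IsClique (G.commonNeighbors a c)) :
    ¬HasInducedCopy cycle4 G := by
  rw [hasInducedCopy_cycle4_iff]
  rintro ⟨a, b, c, d, hac, hbd, hab, hbc, hcd, hda, nac, nbd⟩
  exact nbd <| h a c hac nac ⟨hab, hbc.symm⟩ ⟨hda.symm, hcd⟩ hbd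

theorem hasInducedCopy_cycle4_deleteEdges {u v : V} (huv : G.Adj u v)
    (h : ¬G.IsClique (G.commonNeighbors u v)) :
    HasInducedCopy cycle4 (G.deleteEdges {s(u, v)}) := by
  simp only [isClique_iff, Set.Pairwise, mem_commonNeighbors, not_forall] at h
  obtain ⟨x, ⟨hux, hvx⟩, y, ⟨huy, hvy⟩, hxy, nxy⟩ := h
  rw [hasInducedCopy_cycle4_iff]
  refine ⟨u, x, v, y, huv.ne, hxy, ?_⟩
  simp [hux, hvx.symm, hvy, huy.symm, nxy, hux.ne', huy.ne', hvx.ne', hvy.ne']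

theorem hasInducedCopy_cycle4_sup_edge {u v w z : V} (huv : u ≠ v) (nuv : ¬G.Adj u v)
    (huz : G.Adj u z) (hzw : G.Adj z w) (hwv : G.Adj w v) (nuw : ¬G.Adj u w)
    (nzv : ¬G.Adj z v) : HasInducedCopy cycle4 (G ⊔ fromEdgeSet {s(u, v)}) := by
  rw [hasInducedCopy_cycle4_iff]
  refine ⟨u, z, w, v, ?_, ?_, ?_⟩
  · rintro rfl; exact nuv hwv
  · rintro rfl; exact nuv huz
  simp [*, huv.symm, hwv.ne, huz.ne']

end InducedFourCycle

theorem icosahedron_isClique_commonNeighbors {u v : Fin 2 × Option (ZMod 5)} (huv : u ≠ v)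
    (nuv : ¬icosahedron.Adj u v) : icosahedron.IsClique (icosahedron.commonNeighbors u v) := by
  revert u v
  simp only [isClique_iff, Set.Pairwise, mem_commonNeighbors]
  decide

theorem icosahedron_not_isClique_commonNeighbors {u v : Fin 2 × Option (ZMod 5)}
    (huv : icosahedron.Adj u v) : ¬icosahedron.IsClique (icosahedron.commonNeighbors u v) := by
  revert u v
  simp only [isClique_iff, Set.Pairwise, mem_commonNeighbors]
  decide

theorem icosahedron_exists_induced_path {u v : Fin 2 × Option (ZMod 5)} (huv : u ≠ v)
    (nuv : ¬icosahedron.Adj u v) : ∃ z w, icosahedron.Adj u z ∧ icosahedron.Adj z w ∧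
      icosahedron.Adj w v ∧ ¬icosahedron.Adj u w ∧ ¬icosahedron.Adj z v := by
  revert u v
  decide

/-- The icosahedron is `C₄`-induced-saturated. -/
theorem icosahedron_C4_indSat : IsIndSat icosahedron cycle4 := by
  refine ⟨not_hasInducedCopy_cycle4 fun _ _ => icosahedron_isClique_commonNeighbors,
    fun _ _ huv => hasInducedCopy_cycle4_deleteEdges huv
      (icosahedron_not_isClique_commonNeighbors huv), fun _ _ huv nuv => ?_⟩
  obtain ⟨z, w, huz, hzw, hwv, nuw, nzv⟩ := icosahedron_exists_induced_path huv nuv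
  exact hasInducedCopy_cycle4_sup_edge huv nuv huz hzw hwv nuw nzv
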